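/- (Variance / lag-0 covariance identity) Let d₁, d₂ be real numbers with 0 < d₁ < 1/2 and 0 < d₂ < 1/2, and set ψ_j(d) = Γ(j+d)/(Γ(j+1)·Γ(d)). Then ∑_{j=0}^∞ ψ_j(d₁)·ψ_j(d₂) = Γ(1-d₁-d₂) / (Γ(1-d₁)·Γ(1-d₂)). In particular, with d₁ = d₂ = d, the variance of the fractionally differenced process is ∑_{j=0}^∞ ψ_j(d)² = Γ(1-2d) / (Γ(1-d))². -/

import Mathlib

/-!
The coefficient `ψ_j(a)` is the `j`-th moment of the Beta(a, 1 - a) distribution: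
`ψ_j(a) = B(j + a, 1 - a) / B(a, 1 - a)`. Summing the binomial series
`∑ ψ_j(b) t^j = (1 - t)^(-b)` under the integral (all terms are nonnegative) gives
`∑ ψ_j(a) ψ_j(b) = B(a, 1 - a - b) / B(a, 1 - a) = Γ(1 - a - b) / (Γ(1 - a) Γ(1 - b))`.
-/

open Real MeasureTheory Set ProbabilityTheory

theorem MeasureTheory.hasSum_integral_of_nonneg {α ι : Type*} [MeasurableSpace α]
    {μ : Measure α} [Countable ι] {F : ι → α → ℝ} {f : α → ℝ}
    (hF_meas : ∀ i, AEStronglyMeasurable (F i) μ) (hF_nonneg : ∀ i, 0 ≤ᵐ[μ] F i)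
    (hf : Integrable f μ) (h_lim : ∀ᵐ x ∂μ, HasSum (fun i ↦ F i x) (f x)) :
    HasSum (fun i ↦ ∫ x, F i x ∂μ) (∫ x, f x ∂μ) := by
  refine hasSum_integral_of_dominated_convergence F hF_meas (fun i ↦ ?_)
    (h_lim.mono fun x hx ↦ hx.summable) (hf.congr (h_lim.mono fun x hx ↦ hx.tsum_eq.symm)) h_lim
  filter_upwards [hF_nonneg i] with x hx
  rw [Real.norm_of_nonneg hx]

lemma rpow_mul_one_sub_rpow_nonneg {x : ℝ} (hx : x ∈ Icc 0 1) (p q : ℝ) :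
    0 ≤ x ^ p * (1 - x) ^ q :=
  mul_nonneg (rpow_nonneg hx.1 p) (rpow_nonneg (sub_nonneg.2 hx.2) q)

lemma Real.Gamma_add_nat_eq_ascPochhammer_mul {s : ℝ} (hs : 0 < s) (n : ℕ) :
    Gamma (s + n) = (ascPochhammer ℝ n).eval s * Gamma s := by
  induction n with
  | zero => simp
  | succ n ih =>
    rw [Nat.cast_succ, ← add_assoc, Gamma_add_one (by positivity : s + (n : ℝ) ≠ 0), ih,
      ascPochhammer_succ_eval]
    ring

namespace ProbabilityTheory

variable {a b : ℝ}

lemma lintegral_ofReal_rpow_mul_one_sub_rpow (ha : 0 < a) (hb : 0 < b) :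
    ∫⁻ x in Ioo (0 : ℝ) 1, ENNReal.ofReal (x ^ (a - 1) * (1 - x) ^ (b - 1)) =
      ENNReal.ofReal (beta a b) := by
  have hB := one_div_pos.2 (beta_pos ha hb)
  have h := lintegral_betaPDF_eq_one ha hb
  simp_rw [lintegral_betaPDF, mul_assoc, ENNReal.ofReal_mul hB.le] at h
  rw [lintegral_const_mul _ (by fun_prop)] at h
  rw [← ENNReal.mul_right_inj (ENNReal.ofReal_pos.2 hB).ne' ENNReal.ofReal_ne_top, h,
    ← ENNReal.ofReal_mul hB.le, one_div_mul_cancel (beta_pos ha hb).ne', ENNReal.ofReal_one]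

lemma integrableOn_rpow_mul_one_sub_rpow (ha : 0 < a) (hb : 0 < b) :
    IntegrableOn (fun x : ℝ ↦ x ^ (a - 1) * (1 - x) ^ (b - 1)) (Ioo 0 1) := by
  refine (lintegral_ofReal_ne_top_iff_integrable (by fun_prop) ?_).1 ?_
  · filter_upwards [ae_restrict_mem measurableSet_Ioo] with x hx
    exact rpow_mul_one_sub_rpow_nonneg (Ioo_subset_Icc_self hx) _ _
  · rw [lintegral_ofReal_rpow_mul_one_sub_rpow ha hb]
    exact ENNReal.ofReal_ne_top

lemma integral_rpow_mul_one_sub_rpow (ha : 0 < a) (hb : 0 < b) :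
    ∫ x in Ioo (0 : ℝ) 1, x ^ (a - 1) * (1 - x) ^ (b - 1) = beta a b := by
  rw [integral_eq_lintegral_of_nonneg_ae _ (by fun_prop),
    lintegral_ofReal_rpow_mul_one_sub_rpow ha hb, ENNReal.toReal_ofReal (beta_pos ha hb).le]
  filter_upwards [ae_restrict_mem measurableSet_Ioo] with x hx
  exact rpow_mul_one_sub_rpow_nonneg (Ioo_subset_Icc_self hx) _ _

lemma integral_pow_mul_rpow_mul_one_sub_rpow (ha : 0 < a) (hb : 0 < b) (j : ℕ) :
    ∫ x in Ioo (0 : ℝ) 1, x ^ j * (x ^ (a - 1) * (1 - x) ^ (b - 1)) = beta (j + a) b := by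
  rw [← integral_rpow_mul_one_sub_rpow (by positivity) hb]
  refine setIntegral_congr_fun measurableSet_Ioo fun x hx ↦ ?_
  rw [← mul_assoc, ← rpow_natCast, ← rpow_add hx.1]
  ring_nf

end ProbabilityTheory

noncomputable def fracDiffCoeff (d : ℝ) (j : ℕ) : ℝ :=
  Gamma (j + d) / (Gamma (j + 1) * Gamma d)

section fracDiffCoeff

variable {a b d : ℝ}

lemma fracDiffCoeff_nonneg (hd : 0 ≤ d) (j : ℕ) : 0 ≤ fracDiffCoeff d j :=
  div_nonneg (Gamma_nonneg_of_nonneg (by positivity))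
    (mul_nonneg (Gamma_nonneg_of_nonneg (by positivity)) (Gamma_nonneg_of_nonneg hd))

lemma fracDiffCoeff_eq_choose (hd : 0 < d) (j : ℕ) :
    fracDiffCoeff d j = Ring.choose (d + j - 1) j := by
  have hfact : (j.factorial : ℝ) ≠ 0 := by positivity
  rw [← Ring.multichoose_eq, eq_comm, ← mul_right_inj' hfact, ← nsmul_eq_mul,
    Ring.factorial_nsmul_multichoose_eq_ascPochhammer, Polynomial.ascPochhammer_smeval_eq_eval,
    fracDiffCoeff, Gamma_nat_eq_factorial, add_comm (j : ℝ),
    Gamma_add_nat_eq_ascPochhammer_mul hd]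
  field_simp [(Gamma_pos_of_pos hd).ne']

lemma hasSum_fracDiffCoeff_mul_pow (hd : 0 < d) {t : ℝ} (ht : |t| < 1) :
    HasSum (fun j ↦ fracDiffCoeff d j * t ^ j) ((1 - t) ^ (-d)) := by
  have h := (one_div_one_sub_rpow_hasFPowerSeriesOnBall_zero d).hasSum
    (y := t) (by simpa [enorm_eq_nnnorm, ← NNReal.coe_lt_one] using ht)
  simp only [FormalMultilinearSeries.ofScalars_apply_eq, smul_eq_mul, zero_add] at h
  rw [rpow_neg (by linarith [le_abs_self t]), inv_eq_one_div]
  simpa only [fracDiffCoeff_eq_choose hd] using h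

lemma fracDiffCoeff_eq_beta_div_beta (ha : 0 < a) (ha1 : a < 1) (j : ℕ) :
    fracDiffCoeff a j = beta (j + a) (1 - a) / beta a (1 - a) := by
  have : 0 < Gamma (1 - a) := Gamma_pos_of_pos (by linarith)
  have : 0 < Gamma a := Gamma_pos_of_pos ha
  have : 0 < Gamma (j + 1) := Gamma_pos_of_pos (by positivity)
  rw [fracDiffCoeff, beta, beta, add_sub_cancel, Gamma_one,
    show (j : ℝ) + a + (1 - a) = j + 1 by ring]
  field_simp

lemma beta_div_beta_eq_Gamma_div (ha : 0 < a) (ha1 : a < 1) (hb : b < 1) :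
    beta a (1 - a - b) / beta a (1 - a) =
      Gamma (1 - a - b) / (Gamma (1 - a) * Gamma (1 - b)) := by
  have : 0 < Gamma (1 - a) := Gamma_pos_of_pos (by linarith)
  have : 0 < Gamma a := Gamma_pos_of_pos ha
  have : 0 < Gamma (1 - b) := Gamma_pos_of_pos (by linarith)
  simp only [beta]
  rw [add_sub_cancel, Gamma_one, show a + (1 - a - b) = 1 - b by ring]
  field_simp

theorem hasSum_fracDiffCoeff_mul_fracDiffCoeff (ha : 0 < a) (hb : 0 < b) (hab : a + b < 1) :
    HasSum (fun j ↦ fracDiffCoeff a j * fracDiffCoeff b j)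
      (Gamma (1 - a - b) / (Gamma (1 - a) * Gamma (1 - b))) := by
  have ha1 : 0 < 1 - a := by linarith
  have hab1 : 0 < 1 - a - b := by linarith
  have hmoments : HasSum
      (fun j : ℕ ↦ ∫ x in Ioo (0 : ℝ) 1,
        fracDiffCoeff b j * x ^ j * (x ^ (a - 1) * (1 - x) ^ ((1 - a) - 1)))
      (∫ x in Ioo (0 : ℝ) 1, x ^ (a - 1) * (1 - x) ^ ((1 - a - b) - 1)) := by
    refine hasSum_integral_of_nonneg (fun j ↦ by fun_prop) (fun j ↦ ?_)
      (integrableOn_rpow_mul_one_sub_rpow ha hab1) ?_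
    · filter_upwards [ae_restrict_mem measurableSet_Ioo] with x hx
      exact mul_nonneg (mul_nonneg (fracDiffCoeff_nonneg hb.le j) (pow_nonneg hx.1.le j))
        (rpow_mul_one_sub_rpow_nonneg (Ioo_subset_Icc_self hx) _ _)
    · filter_upwards [ae_restrict_mem measurableSet_Ioo] with x hx
      have hx1 : |x| < 1 := abs_lt.2 ⟨by linarith [hx.1], hx.2⟩
      have hsum := (hasSum_fracDiffCoeff_mul_pow hb hx1).mul_right
        (x ^ (a - 1) * (1 - x) ^ ((1 - a) - 1))
      rwa [mul_left_comm, ← rpow_add (sub_pos.2 hx.2),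
        show -b + (1 - a - 1) = 1 - a - b - 1 by ring] at hsum
  simp only [mul_assoc, integral_const_mul, integral_pow_mul_rpow_mul_one_sub_rpow ha ha1,
    integral_rpow_mul_one_sub_rpow ha hab1] at hmoments
  have hterm : (fun j ↦ fracDiffCoeff a j * fracDiffCoeff b j) =
      fun j ↦ fracDiffCoeff b j * beta (j + a) (1 - a) / beta a (1 - a) := by
    funext j
    rw [fracDiffCoeff_eq_beta_div_beta ha (by linarith) j]
    ring
  rw [hterm, ← beta_div_beta_eq_Gamma_div ha (by linarith) (by linarith)]
  exact hmoments.div_const _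

end fracDiffCoeff

/-- Variance / lag-0 covariance identity: For `0 < d₁, d₂ < 1/2`, with
`ψ_j(d) = Γ(j+d)/(Γ(j+1)·Γ(d))`, one has
`∑_{j=0}^∞ ψ_j(d₁)·ψ_j(d₂) = Γ(1-d₁-d₂)/(Γ(1-d₁)·Γ(1-d₂))`; in particular
`∑_{j=0}^∞ ψ_j(d₁)² = Γ(1-2d₁)/(Γ(1-d₁))²`. -/
theorem variance_identity (d₁ d₂ : ℝ)
    (hd₁0 : 0 < d₁) (hd₁ : d₁ < 1/2) (hd₂0 : 0 < d₂) (hd₂ : d₂ < 1/2) :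
    (∑' j : ℕ,
        (Real.Gamma (j + d₁) / (Real.Gamma (j + 1) * Real.Gamma d₁)) *
          (Real.Gamma (j + d₂) / (Real.Gamma (j + 1) * Real.Gamma d₂)))
      = Real.Gamma (1 - d₁ - d₂) / (Real.Gamma (1 - d₁) * Real.Gamma (1 - d₂)) ∧
    (∑' j : ℕ,
        (Real.Gamma (j + d₁) / (Real.Gamma (j + 1) * Real.Gamma d₁)) ^ 2)
      = Real.Gamma (1 - 2 * d₁) / (Real.Gamma (1 - d₁)) ^ 2 := by
  refine ⟨(hasSum_fracDiffCoeff_mul_fracDiffCoeff hd₁0 hd₂0 (by linarith)).tsum_eq, ?_⟩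
  simp only [sq, two_mul, sub_add_eq_sub_sub]
  exact (hasSum_fracDiffCoeff_mul_fracDiffCoeff hd₁0 hd₁0 (by linarith)).tsum_eq
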